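/- Let C be the middle-third Cantor set. Suppose F ⊆ C is a self-similar set containing more than one point, i.e. F is the attractor of a finite family Φ = {φ_i}_{i=1}^k of contracting similarity maps on ℝ (so F = ⋃_i φ_i(F) and F is compact, nonempty, not a singleton). Then for each i, the contraction ratio ρ_i of φ_i satisfies log|ρ_i|/log 3 ∈ ℚ. -/

import Mathlib

open Set

/-- Summability of digit-type series with bounded coefficients. -/
lemma digit_summable {f : ℕ → ℝ} (hf : ∀ n, |f n| ≤ 2) :
    Summable (fun n => f n / 3 ^ (n + 1)) := by
  apply Summable.of_norm
  have hb : ∀ n : ℕ, ‖f n / 3 ^ (n + 1)‖ ≤ (2/3) * (1/3 : ℝ) ^ n := by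
    intro n
    have h3 : (0:ℝ) < 3 ^ (n+1) := by positivity
    rw [Real.norm_eq_abs, abs_div, abs_of_pos h3]
    rw [div_le_iff₀ h3]
    have he : (2/3) * (1/3 : ℝ) ^ n * 3 ^ (n+1) = 2 := by
      rw [pow_succ, div_pow, one_pow]
      field_simp
    rw [he]
    exact hf n
  exact Summable.of_nonneg_of_le (fun n => norm_nonneg _) hb
    ((summable_geometric_of_lt_one (by norm_num) (by norm_num)).mul_left _)

/-- The key digit-forcing lemma: if `x, y` have Cantor codings and
`3^j * (y - x) - 2k ∈ (1/3, 1)`, then the `j`-th digit of `x` is 0 and of `y` is 2. -/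
lemma key_digit (εx εy : ℕ → ℝ) (hx : ∀ n, εx n = 0 ∨ εx n = 2)
    (hy : ∀ n, εy n = 0 ∨ εy n = 2) (x y : ℝ)
    (hxe : x = ∑' n : ℕ, εx n / 3 ^ (n + 1)) (hye : y = ∑' n : ℕ, εy n / 3 ^ (n + 1))
    (j : ℕ) (k : ℤ)
    (h1 : 1/3 < 3 ^ j * (y - x) - 2 * k) (h2 : 3 ^ j * (y - x) - 2 * k < 1) :
    εx j = 0 ∧ εy j = 2 := by
  classical
  obtain ⟨d, hd⟩ : ∃ d : ℕ → ℝ, ∀ n, d n = εy n - εx n := ⟨_, fun _ => rfl⟩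
  have hd2 : ∀ n, |d n| ≤ 2 := by
    intro n
    rcases hx n with h | h <;> rcases hy n with h' | h' <;> rw [hd n] <;> simp [h, h'] <;> norm_num
  have hdx : ∀ n, |εx n| ≤ 2 := by
    intro n; rcases hx n with h | h <;> simp [h] <;> norm_num
  have hdy : ∀ n, |εy n| ≤ 2 := by
    intro n; rcases hy n with h | h <;> simp [h] <;> norm_num
  have Sx : Summable (fun n => εx n / 3 ^ (n + 1)) := digit_summable hdx
  have Sy : Summable (fun n => εy n / 3 ^ (n + 1)) := digit_summable hdy
  have Sd : Summable (fun n => d n / 3 ^ (n + 1)) := digit_summable hd2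
  have hyx : y - x = ∑' n : ℕ, d n / 3 ^ (n + 1) := by
    rw [hxe, hye, ← Summable.tsum_sub Sy Sx]
    congr 1; funext n; rw [hd n]; ring
  -- multiply by 3^j
  have hmul : (3:ℝ) ^ j * (y - x) = ∑' n : ℕ, (3:ℝ) ^ j * (d n / 3 ^ (n + 1)) := by
    rw [hyx, tsum_mul_left]
  have Sjd : Summable (fun n => (3:ℝ) ^ j * (d n / 3 ^ (n + 1))) := Sd.mul_left _
  have hsplit := Summable.sum_add_tsum_nat_add j Sjd
  -- integer digits
  set ex : ℕ → ℤ := fun n => if εx n = 2 then 1 else 0 with hexdef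
  set ey : ℕ → ℤ := fun n => if εy n = 2 then 1 else 0 with heydef
  have hex : ∀ n, εx n = 2 * ((ex n : ℤ) : ℝ) := by
    intro n; rcases hx n with h | h <;> simp [hexdef, h] <;> norm_num
  have hey : ∀ n, εy n = 2 * ((ey n : ℤ) : ℝ) := by
    intro n; rcases hy n with h | h <;> simp [heydef, h] <;> norm_num
  set N : ℤ := ∑ i ∈ Finset.range j, (ey i - ex i) * 3 ^ (j - i - 1) with hNdef
  have hEN : (∑ i ∈ Finset.range j, (3:ℝ) ^ j * (d i / 3 ^ (i + 1))) = 2 * (N : ℝ) := by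
    rw [hNdef]
    push_cast
    rw [Finset.mul_sum]
    apply Finset.sum_congr rfl
    intro i hi
    have hij : i < j := Finset.mem_range.mp hi
    have hpow : (3:ℝ) ^ j = 3 ^ (i + 1) * 3 ^ (j - i - 1) := by
      rw [← pow_add]; congr 1; omega
    have h31 : (3:ℝ) ^ (i + 1) ≠ 0 := by positivity
    rw [hd i, hex i, hey i, hpow]
    field_simp
  -- the tail
  set f2 : ℕ → ℝ := fun i => d (i + j) / 3 ^ (i + 1) with hf2def
  have htail : (∑' i : ℕ, (3:ℝ) ^ j * (d (i + j) / 3 ^ (i + j + 1))) = ∑' i : ℕ, f2 i := by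
    congr 1; funext i
    have hpow : (3:ℝ) ^ (i + j + 1) = 3 ^ j * 3 ^ (i + 1) := by
      rw [← pow_add]; congr 1; omega
    have h31 : (3:ℝ) ^ (i + 1) ≠ 0 := by positivity
    have h3j : (3:ℝ) ^ j ≠ 0 := by positivity
    rw [hf2def]
    simp only []
    rw [hpow]
    field_simp
  have Sf2 : Summable f2 := digit_summable (fun i => hd2 (i + j))
  have hsplit2 := Summable.sum_add_tsum_nat_add 1 Sf2
  have hf20 : (∑ i ∈ Finset.range 1, f2 i) = d j / 3 := by
    rw [Finset.sum_range_one, hf2def]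
    norm_num
  set t2 : ℝ := ∑' i : ℕ, f2 (i + 1) with ht2def
  have ht2 : |t2| ≤ 1/3 := by
    have hS : Summable fun i => ‖f2 (i + 1)‖ := by
      apply Summable.of_nonneg_of_le (fun n => norm_nonneg _) _
        ((summable_geometric_of_lt_one (r := (1/3:ℝ)) (by norm_num) (by norm_num)).mul_left (2/9 : ℝ))
      intro i
      rw [hf2def]
      simp only [Real.norm_eq_abs]
      have h3 : (0:ℝ) < 3 ^ (i + 1 + 1) := by positivity
      rw [abs_div, abs_of_pos h3, div_le_iff₀ h3]
      have he : (2/9) * (1/3 : ℝ) ^ i * 3 ^ (i + 1 + 1) = 2 := by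
        rw [pow_succ, pow_succ, div_pow, one_pow]
        field_simp
        ring
      rw [he]
      exact hd2 _
    have h1' : ‖t2‖ ≤ ∑' i : ℕ, ‖f2 (i + 1)‖ := by
      rw [ht2def]; exact norm_tsum_le_tsum_norm hS
    have h2' : (∑' i : ℕ, ‖f2 (i + 1)‖) ≤ ∑' i : ℕ, (2/9) * (1/3:ℝ) ^ i := by
      apply Summable.tsum_le_tsum _ hS ((summable_geometric_of_lt_one (by norm_num) (by norm_num)).mul_left _)
      intro i
      rw [hf2def]
      simp only [Real.norm_eq_abs]
      have h3 : (0:ℝ) < 3 ^ (i + 1 + 1) := by positivity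
      rw [abs_div, abs_of_pos h3, div_le_iff₀ h3]
      have he : (2/9) * (1/3 : ℝ) ^ i * 3 ^ (i + 1 + 1) = 2 := by
        rw [pow_succ, pow_succ, div_pow, one_pow]
        field_simp
        ring
      rw [he]
      exact hd2 _
    have h3' : (∑' i : ℕ, (2/9) * (1/3:ℝ) ^ i) = 1/3 := by
      rw [tsum_mul_left, tsum_geometric_of_lt_one (by norm_num) (by norm_num)]
      norm_num
    rw [Real.norm_eq_abs] at h1'
    linarith
  -- combine
  have heq : (3:ℝ) ^ j * (y - x) = 2 * (N:ℝ) + (d j / 3 + t2) := by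
    rw [hmul, ← hsplit, hEN, htail, ← hsplit2, hf20]
  have habs : |d j / 3 + t2| ≤ 1 := by
    have h1'' := hd2 j
    have h2'' := abs_add_le (d j / 3) t2
    have h3'' : |d j / 3| = |d j| / 3 := by
      rw [abs_div]; norm_num
    linarith [abs_nonneg (d j)]
  have hkey : d j / 3 + t2 = (3 ^ j * (y - x) - 2 * k) + 2 * ((k - N : ℤ) : ℝ) := by
    push_cast
    linarith [heq]
  have hδ : ((k - N : ℤ) : ℝ) = 0 := by
    have hb1 : (-1 : ℝ) < ((k - N : ℤ) : ℝ) := by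
      by_contra hcon
      push_neg at hcon
      have : d j / 3 + t2 < -1 := by
        rw [hkey]; linarith
      have := abs_le.mp habs
      linarith [this.1]
    have hb2 : ((k - N : ℤ) : ℝ) < 1 := by
      by_contra hcon
      push_neg at hcon
      have : d j / 3 + t2 > 1 := by
        rw [hkey]; linarith
      have := abs_le.mp habs
      linarith [this.2]
    have hb1' : (-1 : ℤ) < k - N := by exact_mod_cast hb1
    have hb2' : (k - N : ℤ) < 1 := by exact_mod_cast hb2
    have : k - N = 0 := by omega
    rw [this]; norm_num
  have hsw : d j / 3 + t2 = 3 ^ j * (y - x) - 2 * k := by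
    rw [hkey, hδ]; ring
  have ht2' := abs_le.mp ht2
  have hdj_pos : 0 < d j := by
    have h5 : d j / 3 > 1/3 - t2 := by linarith [hsw, h1]
    have h6 : (1:ℝ)/3 - t2 ≥ 0 := by linarith [ht2'.2]
    linarith
  have hdval : d j = εy j - εx j := hd j
  rcases hx j with hxj | hxj <;> rcases hy j with hyj | hyj
  · rw [hxj, hyj] at hdval; norm_num at hdval; rw [hdval] at hdj_pos; norm_num at hdj_pos
  · exact ⟨hxj, hyj⟩
  · rw [hxj, hyj] at hdval; rw [hdval] at hdj_pos; norm_num at hdj_pos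
  · rw [hxj, hyj] at hdval; rw [hdval] at hdj_pos; norm_num at hdj_pos

/-- Integer combinations `p + q*β` with `q ≠ 0` can be found in any small interval. -/
lemma small_step (β : ℝ) (hβ : Irrational β) {ε : ℝ} (hε : 0 < ε) (hε1 : ε < 1) :
    ∃ p q : ℤ, q ≠ 0 ∧ 0 < (p : ℝ) + q * β ∧ (p : ℝ) + q * β < ε := by
  classical
  set S : AddSubgroup ℝ := AddSubgroup.closure {1, β} with hS
  have hdense : Dense (S : Set ℝ) := by
    rcases AddSubgroup.dense_or_cyclic S with h | ⟨a, ha⟩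
    · exact h
    · exfalso
      have h1S : (1:ℝ) ∈ S := AddSubgroup.subset_closure (by simp)
      have hβS : β ∈ S := AddSubgroup.subset_closure (by simp)
      rw [ha] at h1S hβS
      obtain ⟨m, hm⟩ := AddSubgroup.mem_closure_singleton.mp h1S
      obtain ⟨n, hn⟩ := AddSubgroup.mem_closure_singleton.mp hβS
      have hm0 : m ≠ 0 := by
        rintro rfl
        simp at hm
      have ha0 : a = 1 / m := by
        have : (m : ℝ) * a = 1 := by rw [← hm]; simp [zsmul_eq_mul]
        field_simp at this ⊢
        linarith [this]
      have : β = (n : ℝ) / m := by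
        rw [← hn, zsmul_eq_mul, ha0]
        field_simp
      exact hβ ⟨(n : ℚ) / (m : ℚ), by push_cast; rw [this]⟩
  obtain ⟨g, hgS, hg⟩ : ∃ g ∈ (S : Set ℝ), g ∈ Set.Ioo 0 ε := by
    obtain ⟨g, hg1, hg2⟩ := hdense.exists_mem_open isOpen_Ioo (Set.nonempty_Ioo.mpr hε)
    exact ⟨g, hg1, hg2⟩
  -- decompose g
  have hdecomp : ∃ p q : ℤ, g = (p : ℝ) + q * β := by
    set S' : AddSubgroup ℝ :=
      { carrier := {x : ℝ | ∃ p q : ℤ, x = (p : ℝ) + q * β}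
        zero_mem' := ⟨0, 0, by simp⟩
        add_mem' := by
          rintro a b ⟨p₁, q₁, rfl⟩ ⟨p₂, q₂, rfl⟩
          exact ⟨p₁ + p₂, q₁ + q₂, by push_cast; ring⟩
        neg_mem' := by
          rintro a ⟨p₁, q₁, rfl⟩
          exact ⟨-p₁, -q₁, by push_cast; ring⟩ } with hS'
    have hle : S ≤ S' := by
      rw [hS]
      apply AddSubgroup.closure_le _ |>.mpr
      rintro x (rfl | rfl)
      · exact ⟨1, 0, by norm_num⟩
      · exact ⟨0, 1, by norm_num⟩
    exact hle hgS
  obtain ⟨p, q, hpq⟩ := hdecomp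
  refine ⟨p, q, ?_, by rw [← hpq]; exact hg.1, by rw [← hpq]; exact hg.2⟩
  rintro rfl
  rw [hpq] at hg
  have h1 : (0:ℝ) < p := by simpa using hg.1
  have h2 : (p:ℝ) < 1 := by
    simp only [Int.cast_zero, zero_mul, add_zero] at hg
    linarith [hg.2, hε1]
  have h1' : 0 < p := by exact_mod_cast h1
  have h2' : p < 1 := by exact_mod_cast h2
  omega

/-- For irrational positive `β`, the set `{j - n β : j n ∈ ℕ}` is dense. -/
lemma walk (β : ℝ) (hβ : Irrational β) (hβpos : 0 < β) {T T' : ℝ} (h : T < T') :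
    ∃ j n : ℕ, T < (j : ℝ) - n * β ∧ (j : ℝ) - n * β < T' := by
  classical
  set ε : ℝ := min (T' - T) (1/2) with hεdef
  have hε : 0 < ε := lt_min (by linarith) (by norm_num)
  have hε1 : ε < 1 := lt_of_le_of_lt (min_le_right _ _) (by norm_num)
  have hεT : T + ε ≤ T' := by
    have := min_le_left (T' - T) (1/2 : ℝ)
    rw [hεdef]
    linarith [this]
  obtain ⟨p, q, hq0, hg1, hg2⟩ := small_step β hβ hε hε1
  set g : ℝ := (p : ℝ) + q * β with hgdef
  rcases lt_or_gt_of_ne hq0 with hqneg | hqpos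
  · -- ascending walk: g = p + qβ with q < 0, so p ≥ 1
    have hppos : (0:ℝ) < p := by
      have : (q : ℝ) * β < 0 := by
        apply mul_neg_of_neg_of_pos _ hβpos
        exact_mod_cast hqneg
      linarith [hg1]
    have hppos' : 0 < p := by exact_mod_cast hppos
    -- starting point below T
    obtain ⟨N₀, hN₀⟩ := exists_nat_gt ((-T) / β)
    have hstart : -(N₀ : ℝ) * β < T := by
      have := (div_lt_iff₀ hβpos).mp hN₀
      linarith
    -- find first M with -N₀ β + M g > T
    have hex : ∃ M : ℕ, T < -(N₀ : ℝ) * β + M * g := by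
      obtain ⟨M, hM⟩ := exists_nat_gt ((T + (N₀ : ℝ) * β) / g)
      exact ⟨M, by nlinarith [(div_lt_iff₀ hg1).mp hM]⟩
    have hMspec : T < -(N₀ : ℝ) * β + (Nat.find hex) * g := Nat.find_spec hex
    have hMpos : Nat.find hex ≠ 0 := by
      intro hM0
      rw [hM0] at hMspec
      simp at hMspec
      linarith [hstart]
    obtain ⟨M', hM'⟩ : ∃ M', Nat.find hex = M' + 1 := ⟨Nat.find hex - 1, by omega⟩
    rw [hM'] at hMspec
    push_cast at hMspec
    have hMprev : ¬ T < -(N₀ : ℝ) * β + M' * g := Nat.find_min hex (by omega)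
    push_neg at hMprev
    have hub : -(N₀ : ℝ) * β + ((M' : ℝ) + 1) * g < T + ε := by
      have heq1 : -(N₀ : ℝ) * β + ((M' : ℝ) + 1) * g = (-(N₀ : ℝ) * β + M' * g) + g := by
        ring
      rw [heq1]
      linarith [hMprev, hg2]
    -- exhibit naturals
    refine ⟨(M' + 1) * p.toNat, N₀ + (M' + 1) * (-q).toNat, ?_, ?_⟩
    · have hcast : ((((M' + 1) * p.toNat : ℕ)) : ℝ) - ((N₀ + (M' + 1) * (-q).toNat : ℕ) : ℝ) * β
          = -(N₀ : ℝ) * β + ((M' : ℝ) + 1) * g := by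
        have hp' : ((p.toNat : ℕ) : ℝ) = (p : ℝ) := by
          exact_mod_cast congrArg (fun z : ℤ => (z : ℝ)) (Int.toNat_of_nonneg (le_of_lt hppos'))
        have hq' : (((-q).toNat : ℕ) : ℝ) = -(q : ℝ) := by
          exact_mod_cast congrArg (fun z : ℤ => (z : ℝ)) (Int.toNat_of_nonneg (by omega : (0:ℤ) ≤ -q))
        rw [hgdef]
        push_cast [hp', hq']
        ring
      rw [hcast]
      exact hMspec
    · have hcast : ((((M' + 1) * p.toNat : ℕ)) : ℝ) - ((N₀ + (M' + 1) * (-q).toNat : ℕ) : ℝ) * β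
          = -(N₀ : ℝ) * β + ((M' : ℝ) + 1) * g := by
        have hp' : ((p.toNat : ℕ) : ℝ) = (p : ℝ) := by
          exact_mod_cast congrArg (fun z : ℤ => (z : ℝ)) (Int.toNat_of_nonneg (le_of_lt hppos'))
        have hq' : (((-q).toNat : ℕ) : ℝ) = -(q : ℝ) := by
          exact_mod_cast congrArg (fun z : ℤ => (z : ℝ)) (Int.toNat_of_nonneg (by omega : (0:ℤ) ≤ -q))
        rw [hgdef]
        push_cast [hp', hq']
        ring
      rw [hcast]
      linarith [hub, hεT]
  · -- descending walk: q > 0, so p ≤ 0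
    have hpnonpos : p ≤ 0 := by
      have h1 : (p : ℝ) < 1 := by
        have : (q : ℝ) * β > 0 := by
          apply mul_pos _ hβpos
          exact_mod_cast hqpos
        nlinarith [hg2, hε1]
      have : p < 1 := by exact_mod_cast h1
      omega
    obtain ⟨j₀, hj₀⟩ := exists_nat_gt T'
    have hex : ∃ M : ℕ, (j₀ : ℝ) - M * g < T' := by
      obtain ⟨M, hM⟩ := exists_nat_gt (((j₀ : ℝ) - T') / g)
      exact ⟨M, by nlinarith [(div_lt_iff₀ hg1).mp hM]⟩
    have hMspec : (j₀ : ℝ) - (Nat.find hex) * g < T' := Nat.find_spec hex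
    have hMpos : Nat.find hex ≠ 0 := by
      intro hM0
      rw [hM0] at hMspec
      simp at hMspec
      linarith [hj₀]
    obtain ⟨M', hM'⟩ : ∃ M', Nat.find hex = M' + 1 := ⟨Nat.find hex - 1, by omega⟩
    rw [hM'] at hMspec
    push_cast at hMspec
    have hMprev : ¬ (j₀ : ℝ) - M' * g < T' := Nat.find_min hex (by omega)
    push_neg at hMprev
    have hlb : T < (j₀ : ℝ) - ((M' : ℝ) + 1) * g := by
      have heq1 : (j₀ : ℝ) - ((M' : ℝ) + 1) * g = ((j₀ : ℝ) - M' * g) - g := by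
        ring
      rw [heq1]
      have hgε : g < ε := hg2
      linarith [hMprev, hεT]
    refine ⟨(j₀ + (M' + 1) * (-p).toNat), (M' + 1) * q.toNat, ?_, ?_⟩ <;>
    · have hcast : (((j₀ + (M' + 1) * (-p).toNat : ℕ)) : ℝ) - (((M' + 1) * q.toNat : ℕ) : ℝ) * β
          = (j₀ : ℝ) - ((M' : ℝ) + 1) * g := by
        have hp' : (((-p).toNat : ℕ) : ℝ) = -(p : ℝ) := by
          exact_mod_cast congrArg (fun z : ℤ => (z : ℝ)) (Int.toNat_of_nonneg (by omega : (0:ℤ) ≤ -p))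
        have hq' : ((q.toNat : ℕ) : ℝ) = (q : ℝ) := by
          exact_mod_cast congrArg (fun z : ℤ => (z : ℝ)) (Int.toNat_of_nonneg (le_of_lt hqpos))
        rw [hgdef]
        push_cast [hp', hq']
        ring
      rw [hcast]
      first
        | exact hlb
        | exact hMspec

/-- Density of `3^j * μ^n * P` in the positive reals when `log μ / log 3` is irrational. -/
lemma dense3mu (μ : ℝ) (hμ0 : 0 < μ) (hμ1 : μ < 1)
    (hirr : Irrational (Real.log μ / Real.log 3))
    (P A B : ℝ) (hP : 0 < P) (hA : 0 < A) (hAB : A < B) :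
    ∃ j n : ℕ, A < 3 ^ j * μ ^ n * P ∧ 3 ^ j * μ ^ n * P < B := by
  have h3 : (0:ℝ) < Real.log 3 := Real.log_pos (by norm_num)
  set β : ℝ := -(Real.log μ / Real.log 3) with hβdef
  have hμlog : Real.log μ < 0 := Real.log_neg hμ0 hμ1
  have hβpos : 0 < β := by
    rw [hβdef]
    have : Real.log μ / Real.log 3 < 0 := div_neg_of_neg_of_pos hμlog h3
    linarith
  have hβirr : Irrational β := hirr.neg
  have hAP : (0:ℝ) < A / P := by positivity
  have hABP : A / P < B / P := by
    apply div_lt_div_of_pos_right hAB hP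
  have hT : Real.log (A / P) / Real.log 3 < Real.log (B / P) / Real.log 3 := by
    apply div_lt_div_of_pos_right _ h3
    exact Real.log_lt_log hAP hABP
  obtain ⟨j, n, h1, h2⟩ := walk β hβirr hβpos hT
  have hβl : β * Real.log 3 = -Real.log μ := by
    rw [hβdef]
    field_simp
  have hv : (0:ℝ) < 3 ^ j * μ ^ n * P := by positivity
  have hlogv : Real.log (3 ^ j * μ ^ n * P) =
      j * Real.log 3 + n * Real.log μ + Real.log P := by
    rw [Real.log_mul (by positivity) (ne_of_gt hP), Real.log_mul (by positivity) (by positivity),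
      Real.log_pow, Real.log_pow]
  have hexp : ∀ jj nn : ℝ, (jj - nn * β) * Real.log 3 = jj * Real.log 3 + nn * Real.log μ := by
    intro jj nn
    have : (jj - nn * β) * Real.log 3 = jj * Real.log 3 - nn * (β * Real.log 3) := by ring
    rw [this, hβl]
    ring
  have hlogA : Real.log (A / P) = Real.log A - Real.log P :=
    Real.log_div (ne_of_gt hA) (ne_of_gt hP)
  have hlogB : Real.log (B / P) = Real.log B - Real.log P :=
    Real.log_div (ne_of_gt (lt_trans hA hAB)) (ne_of_gt hP)
  have hB : (0:ℝ) < B := lt_trans hA hAB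
  refine ⟨j, n, ?_, ?_⟩
  · -- A < v
    rw [← Real.log_lt_log_iff hA hv, hlogv]
    have h1' : Real.log (A / P) < ((j:ℝ) - n * β) * Real.log 3 :=
      (div_lt_iff₀ h3).mp h1
    rw [hexp] at h1'
    rw [hlogA] at h1'
    linarith
  · -- v < B
    rw [← Real.log_lt_log_iff hv hB, hlogv]
    have h2' : ((j:ℝ) - n * β) * Real.log 3 < Real.log (B / P) :=
      (lt_div_iff₀ h3).mp h2
    rw [hexp] at h2'
    rw [hlogB] at h2'
    linarith

/-- The middle-third Cantor set. -/
def cantorC : Set ℝ :=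
  {x | ∃ ε : ℕ → ℝ, (∀ n, ε n = 0 ∨ ε n = 2) ∧ x = ∑' n : ℕ, ε n / 3 ^ (n + 1)}

theorem stmt_4 (k : ℕ) (hk : 0 < k) (ρ d : Fin k → ℝ)
    (hρ : ∀ i, 0 < |ρ i| ∧ |ρ i| < 1)
    (F : Set ℝ) (hFne : F.Nonempty) (hFc : IsCompact F)
    (hattr : F = ⋃ i, (fun x => ρ i * x + d i) '' F)
    (hFC : F ⊆ cantorC)
    (hnontriv : ∃ x ∈ F, ∃ y ∈ F, x ≠ y) :
    ∀ i, ∃ q : ℚ, (q : ℝ) = Real.log |ρ i| / Real.log 3 := by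
  intro i
  by_contra hq
  have hirr0 : Irrational (Real.log |ρ i| / Real.log 3) := by
    intro hmem
    obtain ⟨q, hq'⟩ := hmem
    exact hq ⟨q, hq'⟩
  obtain ⟨hρ0, hρ1⟩ := hρ i
  have hr0 : ρ i ≠ 0 := by
    intro h
    rw [h] at hρ0
    simp at hρ0
  set μ : ℝ := (ρ i) ^ 2 with hμdef
  have hμeq : μ = |ρ i| ^ 2 := by rw [hμdef, sq_abs]
  have hμ0 : 0 < μ := by
    rw [hμeq]; positivity
  have hμ1 : μ < 1 := by
    rw [hμeq]
    calc |ρ i| ^ 2 ≤ |ρ i| * 1 := by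
          rw [sq]
          exact mul_le_mul_of_nonneg_left (le_of_lt hρ1) (abs_nonneg _)
      _ < 1 := by rw [mul_one]; exact hρ1
  have hlogμ : Real.log μ = 2 * Real.log |ρ i| := by
    rw [hμeq, Real.log_pow]
    push_cast
    ring
  have hirr : Irrational (Real.log μ / Real.log 3) := by
    have heq2 : Real.log μ / Real.log 3 = ((2:ℚ):ℝ) * (Real.log |ρ i| / Real.log 3) := by
      rw [hlogμ]
      push_cast
      ring
    rw [heq2]
    exact Irrational.ratCast_mul hirr0 (by norm_num)
  -- φ_i maps F into F
  have hφF : ∀ w ∈ F, ρ i * w + d i ∈ F := by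
    intro w hw
    have h1 : ρ i * w + d i ∈ (fun x => ρ i * x + d i) '' F := ⟨w, hw, rfl⟩
    have h2 : (fun x => ρ i * x + d i) '' F ⊆ ⋃ i', (fun x => ρ i' * x + d i') '' F :=
      Set.subset_iUnion (fun i' => (fun x => ρ i' * x + d i') '' F) i
    rw [hattr]
    exact h2 h1
  set ψ : ℝ → ℝ := fun w => ρ i * (ρ i * w + d i) + d i with hψdef
  have hψF : ∀ w ∈ F, ψ w ∈ F := fun w hw => hφF _ (hφF w hw)
  have hψdiff : ∀ a b : ℝ, ψ a - ψ b = μ * (a - b) := by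
    intro a b
    rw [hψdef, hμdef]
    ring
  obtain ⟨x, hxF, y, hyF, hxy⟩ := hnontriv
  -- a third point
  have h3pts : ∃ u₁ u₂ u₃ : ℝ, u₁ ∈ F ∧ u₂ ∈ F ∧ u₃ ∈ F ∧ u₁ < u₂ ∧ u₂ < u₃ := by
    have hz : ∃ z ∈ F, z ≠ x ∧ z ≠ y := by
      by_contra hcon
      push_neg at hcon
      have hpx : ψ x = x ∨ ψ x = y := by
        rcases eq_or_ne (ψ x) x with e | e
        · exact Or.inl e
        · exact Or.inr (hcon (ψ x) (hψF x hxF) e)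
      have hpy : ψ y = x ∨ ψ y = y := by
        rcases eq_or_ne (ψ y) x with e | e
        · exact Or.inl e
        · exact Or.inr (hcon (ψ y) (hψF y hyF) e)
      have hdxy := hψdiff x y
      have hxysub : x - y ≠ 0 := sub_ne_zero_of_ne hxy
      rcases hpx with e1 | e1 <;> rcases hpy with e2 | e2
      · -- ψ x = x, ψ y = x
        rw [e1, e2] at hdxy
        simp at hdxy
        rcases hdxy with h | h
        · exact (ne_of_gt hμ0) h
        · exact hxy (by linarith)
      · -- ψ x = x, ψ y = y
        rw [e1, e2] at hdxy
        have hfac : (1 - μ) * (x - y) = 0 := by linear_combination hdxy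
        rcases mul_eq_zero.mp hfac with h | h
        · linarith [hμ1]
        · exact hxysub h
      · -- ψ x = y, ψ y = x
        rw [e1, e2] at hdxy
        have hfac : (1 + μ) * (x - y) = 0 := by linear_combination -hdxy
        rcases mul_eq_zero.mp hfac with h | h
        · linarith [hμ0]
        · exact hxysub h
      · -- ψ x = y, ψ y = y
        rw [e1, e2] at hdxy
        simp at hdxy
        rcases hdxy with h | h
        · exact (ne_of_gt hμ0) h
        · exact hxy (by linarith)
    obtain ⟨z, hzF, hzx, hzy⟩ := hz
    rcases lt_trichotomy x y with hxy' | hxy' | hxy'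
    · rcases lt_trichotomy z x with hzx' | hzx' | hzx'
      · exact ⟨z, x, y, hzF, hxF, hyF, hzx', hxy'⟩
      · exact absurd hzx' hzx
      · rcases lt_trichotomy z y with hzy' | hzy' | hzy'
        · exact ⟨x, z, y, hxF, hzF, hyF, hzx', hzy'⟩
        · exact absurd hzy' hzy
        · exact ⟨x, y, z, hxF, hyF, hzF, hxy', hzy'⟩
    · exact absurd hxy' hxy
    · rcases lt_trichotomy z y with hzy' | hzy' | hzy'
      · exact ⟨z, y, x, hzF, hyF, hxF, hzy', hxy'⟩
      · exact absurd hzy' hzy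
      · rcases lt_trichotomy z x with hzx' | hzx' | hzx'
        · exact ⟨y, z, x, hyF, hzF, hxF, hzy', hzx'⟩
        · exact absurd hzx' hzx
        · exact ⟨y, x, z, hyF, hxF, hzF, hxy', hzx'⟩
  obtain ⟨u₁, u₂, u₃, hu₁F, hu₂F, hu₃F, h12, h23⟩ := h3pts
  set P : ℝ := u₂ - u₁ with hPdef
  set Q : ℝ := u₃ - u₁ with hQdef
  have hP : 0 < P := by rw [hPdef]; linarith
  have hPQ : P < Q := by rw [hPdef, hQdef]; linarith
  have hQ : 0 < Q := lt_trans hP hPQ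
  set γ : ℝ := Q / P with hγdef
  have hγ : 1 < γ := by
    rw [hγdef]
    exact (one_lt_div hP).mpr hPQ
  have hγ0 : 0 < γ := lt_trans one_pos hγ
  -- iterates stay in F and scale differences
  have hitF : ∀ w ∈ F, ∀ n : ℕ, ψ^[n] w ∈ F := by
    intro w hw n
    induction n with
    | zero => simpa using hw
    | succ n ih =>
      rw [Function.iterate_succ_apply']
      exact hψF _ ih
  have hdiff : ∀ (v w : ℝ) (n : ℕ), ψ^[n] v - ψ^[n] w = μ ^ n * (v - w) := by
    intro v w n
    induction n with
    | zero => simp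
    | succ n ih =>
      rw [Function.iterate_succ_apply', Function.iterate_succ_apply', hψdiff, ih, pow_succ]
      ring
  -- choose target interval and integer K
  obtain ⟨K, A, B, hA13, hB1, hAB, hγA, hγB⟩ :
      ∃ (K : ℤ) (A B : ℝ), 1/3 ≤ A ∧ B ≤ 1 ∧ A < B ∧
        (1 + 2*(K:ℝ) ≤ γ * A) ∧ (γ * B ≤ 5/3 + 2*(K:ℝ)) := by
    rcases lt_or_ge γ 5 with h5 | h5
    · refine ⟨0, max (1/3) (1/γ), min 1 (5/(3*γ)), le_max_left _ _, min_le_left _ _, ?_, ?_, ?_⟩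
      · apply max_lt
        · apply lt_min
          · norm_num
          · rw [lt_div_iff₀ (by positivity)]
            linarith
        · apply lt_min
          · rw [div_lt_one hγ0]
            exact hγ
          · rw [div_lt_div_iff₀ hγ0 (by positivity)]
            linarith
      · have h1 : γ * (1/γ) = 1 := by field_simp
        have h2 : γ * (1/γ) ≤ γ * max (1/3) (1/γ) :=
          mul_le_mul_of_nonneg_left (le_max_right _ _) (le_of_lt hγ0)
        push_cast
        linarith
      · have h1 : γ * (5/(3*γ)) = 5/3 := by field_simp
        have h2 : γ * min 1 (5/(3*γ)) ≤ γ * (5/(3*γ)) :=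
          mul_le_mul_of_nonneg_left (min_le_right _ _) (le_of_lt hγ0)
        push_cast
        linarith
    · set K : ℤ := ⌊(γ - 3)/6⌋ + 1 with hKdef
      have hK1 : (γ - 3)/6 < (K:ℝ) := by
        rw [hKdef]
        push_cast
        exact Int.lt_floor_add_one _
      have hK2 : (K:ℝ) ≤ (γ - 3)/6 + 1 := by
        rw [hKdef]
        push_cast
        have := Int.floor_le ((γ - 3)/6)
        linarith
      refine ⟨K, (1 + 2*(K:ℝ))/γ, (5/3 + 2*(K:ℝ))/γ, ?_, ?_, ?_, ?_, ?_⟩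
      · rw [le_div_iff₀ hγ0]
        linarith
      · rw [div_le_one hγ0]
        linarith
      · apply div_lt_div_of_pos_right _ hγ0
        linarith
      · have : γ * ((1 + 2*(K:ℝ))/γ) = 1 + 2*(K:ℝ) := by
          field_simp
        linarith [this]
      · have : γ * ((5/3 + 2*(K:ℝ))/γ) = 5/3 + 2*(K:ℝ) := by
          field_simp
        linarith [this]
  -- density gives the magic scale
  obtain ⟨j, n, hv1, hv2⟩ := dense3mu μ hμ0 hμ1 hirr P A B hP (by linarith : (0:ℝ) < A) hAB
  set v : ℝ := 3 ^ j * μ ^ n * P with hvdef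
  have hγv : γ * v = 3 ^ j * μ ^ n * Q := by
    rw [hγdef, hvdef]
    field_simp
  -- the three iterated points with their codings
  obtain ⟨εa, hεa01, hεae⟩ := hFC (hitF u₁ hu₁F n)
  obtain ⟨εb, hεb01, hεbe⟩ := hFC (hitF u₂ hu₂F n)
  obtain ⟨εc, hεc01, hεce⟩ := hFC (hitF u₃ hu₃F n)
  have hba : ψ^[n] u₂ - ψ^[n] u₁ = μ ^ n * P := hdiff u₂ u₁ n
  have hca : ψ^[n] u₃ - ψ^[n] u₁ = μ ^ n * Q := hdiff u₃ u₁ n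
  -- first application: digit of a is 0
  have key1 : εa j = 0 ∧ εb j = 2 := by
    apply key_digit εa εb hεa01 hεb01 _ _ hεae hεbe j 0
    · rw [hba]
      push_cast
      have : (3:ℝ) ^ j * (μ ^ n * P) = v := by rw [hvdef]; ring
      rw [this]
      linarith
    · rw [hba]
      push_cast
      have : (3:ℝ) ^ j * (μ ^ n * P) = v := by rw [hvdef]; ring
      rw [this]
      linarith
  -- second application: digit of a is 2
  have hγv1 : 1 + 2*(K:ℝ) < γ * v := by
    have : γ * A < γ * v := by
      apply mul_lt_mul_of_pos_left hv1 hγ0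
    linarith
  have hγv2 : γ * v < 5/3 + 2*(K:ℝ) := by
    have : γ * v < γ * B := by
      apply mul_lt_mul_of_pos_left hv2 hγ0
    linarith
  have key2 : εc j = 0 ∧ εa j = 2 := by
    apply key_digit εc εa hεc01 hεa01 _ _ hεce hεae j (-(K+1))
    · have hac : ψ^[n] u₁ - ψ^[n] u₃ = -(μ ^ n * Q) := by
        rw [← hca]; ring
      rw [hac]
      push_cast
      have : (3:ℝ) ^ j * (-(μ ^ n * Q)) = -(γ * v) := by rw [hγv]; ring
      rw [this]
      linarith
    · have hac : ψ^[n] u₁ - ψ^[n] u₃ = -(μ ^ n * Q) := by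
        rw [← hca]; ring
      rw [hac]
      push_cast
      have : (3:ℝ) ^ j * (-(μ ^ n * Q)) = -(γ * v) := by rw [hγv]; ring
      rw [this]
      linarith
  rw [key1.1] at key2
  have := key2.2
  norm_num at this
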